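/- arXiv:1101.5894 — 2 statements merged into one kernel-verified Lean document; each statement's English description precedes it below -/
import Mathlib

section
/- A map f : Q⁴ → Q⁴ over an ordered field Q that is a bijection preserving the Minkowski quadratic form differences (μ(f(x̄),f(ȳ)) = μ(x̄,ȳ) for all x̄, ȳ, where μ(x̄,ȳ) = (x₁−y₁)²+(x₂−y₂)²+(x₃−y₃)²−(x₄−y₄)²) maps lines to lines; in particular, if ȳ = x̄ + λ(z̄−x̄) with x̄, z̄ timelike separated (μ(x̄,z̄) < 0), then f(ȳ) = f(x̄) + λ(f(z̄) − f(x̄)). -/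
/-!
Translate so that `x` becomes the origin: `g v = f (v + x) - f x` is then a surjection fixing `0`
that preserves the Minkowski quadratic form of differences. By polarization it preserves the
Minkowski bilinear form `B`, so `g (c • u) - c • g u` is `B`-orthogonal to every `g t`, i.e. to
everything; nondegeneracy makes it vanish, and `g (c • (z - x)) = c • g (z - x)` is the claim.
-/

def mu {Q : Type} [Field Q] [LinearOrder Q] [IsStrictOrderedRing Q] (x y : Fin 4 → Q) : Q :=
  (x 0 - y 0)^2 + (x 1 - y 1)^2 + (x 2 - y 2)^2 - (x 3 - y 3)^2

open Function
open LinearMap (BilinForm)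

section BilinearIsometry

variable {R V : Type*} [CommRing R] [AddCommGroup V] [Module R V] {B : BilinForm R V} {g : V → V}

theorem LinearMap.BilinForm.IsSymm.apply_map_map_of_apply_map_sub [IsDomain R] [NeZero (2 : R)]
    (hB : B.IsSymm) (hg0 : g 0 = 0)
    (hg : ∀ u v, B (g u - g v) (g u - g v) = B (u - v) (u - v)) (u v : V) :
    B (g u) (g v) = B u v := by
  have hpolar : ∀ a b : V, B (a - b) (a - b) = B a a + B b b - 2 * B a b := by
    intro a b
    simp only [map_sub, LinearMap.sub_apply, hB.eq b a]
    ring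
  have hnorm : ∀ a, B (g a) (g a) = B a a := fun a => by simpa [hg0] using hg a 0
  have h := hg u v
  rw [hpolar, hpolar, hnorm, hnorm] at h
  exact mul_left_cancel₀ two_ne_zero (by linear_combination -h)

theorem LinearMap.BilinForm.map_smul_of_apply_map_map (hB : B.SeparatingLeft)
    (hsurj : Surjective g) (hg : ∀ u v, B (g u) (g v) = B u v) (c : R) (u : V) :
    g (c • u) = c • g u := by
  rw [← sub_eq_zero]
  refine hB _ fun w => ?_
  obtain ⟨t, rfl⟩ := hsurj w
  simp only [map_sub, map_smul, LinearMap.sub_apply, LinearMap.smul_apply, hg, smul_eq_mul,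
    sub_self]

theorem LinearMap.BilinForm.IsSymm.map_lineMap_of_apply_map_sub [IsDomain R] [NeZero (2 : R)]
    (hB : B.IsSymm) (hBsep : B.SeparatingLeft) {f : V → V} (hsurj : Surjective f)
    (hf : ∀ u v, B (f u - f v) (f u - f v) = B (u - v) (u - v)) (x z : V) (c : R) :
    f (AffineMap.lineMap x z c) = AffineMap.lineMap (f x) (f z) c := by
  set g : V → V := fun v => f (v + x) - f x
  have hg : ∀ u v, B (g u - g v) (g u - g v) = B (u - v) (u - v) := fun u v => by
    simpa [g] using hf (u + x) (v + x)
  have hgsurj : Surjective g := fun w => by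
    obtain ⟨a, ha⟩ := hsurj (w + f x)
    exact ⟨a - x, by simp [g, ha]⟩
  have hsmul := LinearMap.BilinForm.map_smul_of_apply_map_map hBsep hgsurj
    (hB.apply_map_map_of_apply_map_sub (by simp [g]) hg) c (z - x)
  simpa [g, AffineMap.lineMap_apply, sub_eq_iff_eq_add] using hsmul

end BilinearIsometry

def minkowskiForm (R : Type*) [CommRing R] : BilinForm R (Fin 4 → R) :=
  Matrix.toBilin' (Matrix.diagonal ![1, 1, 1, -1])

theorem minkowskiForm_apply {R : Type*} [CommRing R] (u v : Fin 4 → R) :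
    minkowskiForm R u v = u 0 * v 0 + u 1 * v 1 + u 2 * v 2 - u 3 * v 3 := by
  simp only [minkowskiForm, Matrix.toBilin'_apply', dotProduct, Matrix.mulVec_diagonal,
    Fin.sum_univ_four, Fin.isValue, Matrix.cons_val_zero, Matrix.cons_val_one, Matrix.cons_val,
    one_mul, neg_mul, mul_neg]
  ring

theorem minkowskiForm_isSymm (R : Type*) [CommRing R] : (minkowskiForm R).IsSymm :=
  Matrix.isSymm_toBilin'_iff_isSymm.mpr (Matrix.isSymm_diagonal _)

theorem minkowskiForm_nondegenerate (R : Type*) [CommRing R] [IsDomain R] :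
    (minkowskiForm R).Nondegenerate :=
  LinearMap.BilinForm.nondegenerate_toBilin'_of_det_ne_zero' _ (by simp [Fin.prod_univ_four])

theorem mu_eq_minkowskiForm {Q : Type} [Field Q] [LinearOrder Q] [IsStrictOrderedRing Q]
    (x y : Fin 4 → Q) : mu x y = minkowskiForm Q (x - y) (x - y) := by
  simp only [mu, minkowskiForm_apply, Pi.sub_apply]
  ring

theorem mu_preserving_maps_lines_to_lines_general {Q : Type} [Field Q] [LinearOrder Q] [IsStrictOrderedRing Q]
    (f : (Fin 4 → Q) → (Fin 4 → Q))
    (hbij : Function.Bijective f)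
    (hmu : ∀ x y, mu (f x) (f y) = mu x y)
    (x y z : Fin 4 → Q) (l : Q)
    (hy : y = fun i => x i + l * (z i - x i)) :
    f y = fun i => f x i + l * (f z i - f x i) := by
  have hline := (minkowskiForm_isSymm Q).map_lineMap_of_apply_map_sub
    (minkowskiForm_nondegenerate Q).1 hbij.surjective
    (fun u v => by rw [← mu_eq_minkowskiForm, hmu, mu_eq_minkowskiForm]) x z l
  have hlineMap : ∀ a b : Fin 4 → Q, AffineMap.lineMap a b l = fun i => a i + l * (b i - a i) :=
    fun a b => by
      ext i
      simp only [AffineMap.lineMap_apply_module', Pi.add_apply, Pi.smul_apply, Pi.sub_apply,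
        smul_eq_mul]
      ring
  rw [hy, ← hlineMap, hline, hlineMap]

theorem mu_preserving_maps_lines_to_lines {Q : Type} [Field Q] [LinearOrder Q] [IsStrictOrderedRing Q]
    (f : (Fin 4 → Q) → (Fin 4 → Q))
    (hbij : Function.Bijective f)
    (hmu : ∀ x y, mu (f x) (f y) = mu x y)
    (x y z : Fin 4 → Q) (l : Q)
    (htime : mu x z < 0)
    (hy : y = fun i => x i + l * (z i - x i)) :
    f y = fun i => f x i + l * (f z i - f x i) :=
  mu_preserving_maps_lines_to_lines_general f hbij hmu x y z l hy
end

section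
/- Time dilation in SpecRel: suppose m and k are inertial observers, and according to m, observer k passes through (0,0,0,0) and moves with velocity v along the first spatial axis, 0 ≤ v < 1 (i.e., W(m,k,x̄) holds exactly for points x̄ of the form (v·t, 0, 0, t)). If the worldview transformation w from k's coordinates to m's coordinates is an affine bijection preserving μ and fixing the correspondence of worldlines (w maps k's time axis onto k's worldline as seen by m, with w(0,0,0,0)=(0,0,0,0)), then the coordinate time in m between the images of k's clock ticks (0,0,0,0) and (0,0,0,1) is 1/√(1−v²), i.e., the fourth coordinate of w(0,0,0,1) has absolute value 1/√(1−v²), provided √(1−v²) exists in Q. -/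
lemma mu_vec_zero {Q : Type} [Field Q] [LinearOrder Q] [IsStrictOrderedRing Q] (a b c d : Q) :
    mu ![a, b, c, d] 0 = a ^ 2 + b ^ 2 + c ^ 2 - d ^ 2 := by
  simp [mu]

lemma abs_eq_one_div_of_mul_sq_eq_one {K : Type*} [Field K] [LinearOrder K] [IsStrictOrderedRing K]
    {t s : K} (hs : 0 < s) (h : (t * s) ^ 2 = 1) : |t| = 1 / s := by
  apply eq_one_div_of_mul_eq_one_left
  rw [← abs_of_pos hs, ← abs_mul]
  exact (pow_eq_one_iff_of_nonneg (abs_nonneg _) two_ne_zero).mp (by rw [sq_abs, h])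

theorem time_dilation_general {Q : Type} [Field Q] [LinearOrder Q] [IsStrictOrderedRing Q]
    (v s : Q)
    (hs : s ^ 2 = 1 - v ^ 2) (hspos : 0 < s)
    (w : (Fin 4 → Q) → (Fin 4 → Q))
    (hmu : ∀ x y, mu (w x) (w y) = mu x y)
    (h0 : w 0 = 0)
    (haxis : ∀ y : Fin 4 → Q,
      (∃ t : Q, w ![0, 0, 0, t] = y) ↔ (∃ t : Q, y = ![v * t, 0, 0, t])) :
    |w ![0, 0, 0, 1] 3| = 1 / s := by
  obtain ⟨t, ht⟩ := (haxis (w ![0, 0, 0, 1])).mp ⟨1, rfl⟩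
  -- The Minkowski interval from the origin is -t² (1 - v²) after w and -1 before.
  have hinterval := hmu ![0, 0, 0, 1] 0
  rw [h0, ht, mu_vec_zero, mu_vec_zero] at hinterval
  rw [ht]
  show |t| = 1 / s
  exact abs_eq_one_div_of_mul_sq_eq_one hspos (by rw [mul_pow, hs]; linear_combination -hinterval)

theorem time_dilation {Q : Type} [Field Q] [LinearOrder Q] [IsStrictOrderedRing Q]
    (v s : Q) (hv0 : 0 ≤ v) (hv1 : v < 1)
    (hs : s ^ 2 = 1 - v ^ 2) (hspos : 0 < s)
    (w : (Fin 4 → Q) → (Fin 4 → Q))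
    (hbij : Function.Bijective w)
    (haff : ∃ (L : (Fin 4 → Q) → (Fin 4 → Q)) (b : Fin 4 → Q),
      IsLinearMap Q L ∧ ∀ x, w x = fun i => L x i + b i)
    (hmu : ∀ x y, mu (w x) (w y) = mu x y)
    (h0 : w 0 = 0)
    (haxis : ∀ y : Fin 4 → Q,
      (∃ t : Q, w ![0, 0, 0, t] = y) ↔ (∃ t : Q, y = ![v * t, 0, 0, t])) :
    |w ![0, 0, 0, 1] 3| = 1 / s :=
  time_dilation_general v s hs hspos w hmu h0 haxis
end
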